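/- Let H be a Hopf quasigroup over a field k and let B be a right H-comodule magma with a total integral h: H → B that is a morphism of right H-comodules with h(1_H) = 1_B. Then the endomorphism q_B : B → B defined by q_B(b) = b_(0) · h(λ(b_(1))), where ρ_B(b) = b_(0) ⊗ b_(1) and λ is the antipode of H, is idempotent: q_B ∘ q_B = q_B. -/
import Mathlib


open TensorProduct

noncomputable section

namespace DoiHopf

variable (k : Type) [Field k]
variable (H : Type) [AddCommGroup H] [Module k H]

/-- A Hopf quasigroup structure on `H`: a unital (not necessarily associative) magma and a
coassociative counital comonoid such that `eps` and `delta` are morphisms of unital magmas,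
with an antipode `lam` satisfying the four Hopf quasigroup antipode identities. -/
structure IsHopfQuasigroup (mul : H ⊗[k] H →ₗ[k] H) (one : H)
    (eps : H →ₗ[k] k) (delta : H →ₗ[k] H ⊗[k] H) (lam : H →ₗ[k] H) : Prop where
  one_mul : ∀ x, mul (one ⊗ₜ[k] x) = x
  mul_one : ∀ x, mul (x ⊗ₜ[k] one) = x
  coassoc : (TensorProduct.assoc k H H H).toLinearMap ∘ₗ delta.rTensor H ∘ₗ delta
      = delta.lTensor H ∘ₗ delta
  counit_left : ∀ x, (TensorProduct.lid k H) ((eps.rTensor H) (delta x)) = x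
  counit_right : ∀ x, (TensorProduct.rid k H) ((eps.lTensor H) (delta x)) = x
  eps_mul : ∀ x y, eps (mul (x ⊗ₜ[k] y)) = eps x * eps y
  eps_one : eps one = 1
  delta_mul : delta ∘ₗ mul = (TensorProduct.map mul mul)
      ∘ₗ (TensorProduct.tensorTensorTensorComm k H H H H).toLinearMap
      ∘ₗ (TensorProduct.map delta delta)
  delta_one : delta one = one ⊗ₜ[k] one
  antipode_left₁ : mul ∘ₗ (TensorProduct.map lam mul)
      ∘ₗ (TensorProduct.assoc k H H H).toLinearMap ∘ₗ delta.rTensor H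
      = (TensorProduct.lid k H).toLinearMap ∘ₗ eps.rTensor H
  antipode_left₂ : mul ∘ₗ (TensorProduct.map (LinearMap.id : H →ₗ[k] H) (mul ∘ₗ lam.rTensor H))
      ∘ₗ (TensorProduct.assoc k H H H).toLinearMap ∘ₗ delta.rTensor H
      = (TensorProduct.lid k H).toLinearMap ∘ₗ eps.rTensor H
  antipode_right₁ : mul ∘ₗ (TensorProduct.map mul lam)
      ∘ₗ (TensorProduct.assoc k H H H).symm.toLinearMap ∘ₗ delta.lTensor H
      = (TensorProduct.rid k H).toLinearMap ∘ₗ eps.lTensor H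
  antipode_right₂ : mul ∘ₗ (TensorProduct.map (mul ∘ₗ lam.lTensor H) (LinearMap.id : H →ₗ[k] H))
      ∘ₗ (TensorProduct.assoc k H H H).symm.toLinearMap ∘ₗ delta.lTensor H
      = (TensorProduct.rid k H).toLinearMap ∘ₗ eps.lTensor H

/-- A right `H`-comodule magma structure on `B`: a unital magma which is a right `H`-comodule
whose coaction is multiplicative for the tensor product magma structure on `B ⊗ H` and
sends the unit to `1_B ⊗ 1_H`. -/
structure IsComoduleMagma (mul : H ⊗[k] H →ₗ[k] H) (one : H)
    (eps : H →ₗ[k] k) (delta : H →ₗ[k] H ⊗[k] H)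
    {B : Type} [AddCommGroup B] [Module k B]
    (mulB : B ⊗[k] B →ₗ[k] B) (oneB : B) (rho : B →ₗ[k] B ⊗[k] H) : Prop where
  oneB_mul : ∀ b, mulB (oneB ⊗ₜ[k] b) = b
  mul_oneB : ∀ b, mulB (b ⊗ₜ[k] oneB) = b
  counit : ∀ b, (TensorProduct.rid k B) ((eps.lTensor B) (rho b)) = b
  coassoc : rho.rTensor H ∘ₗ rho
      = (TensorProduct.assoc k B H H).symm.toLinearMap ∘ₗ delta.lTensor B ∘ₗ rho
  mul_compat : rho ∘ₗ mulB = (TensorProduct.map mulB mul)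
      ∘ₗ (TensorProduct.tensorTensorTensorComm k B H B H).toLinearMap
      ∘ₗ (TensorProduct.map rho rho)
  one_compat : rho oneB = oneB ⊗ₜ[k] one

/-- The generic "action against `f : H → B'` after the coaction" endomorphism; for
`f = h ∘ λ` this is the canonical idempotent `q` of the paper. -/
def act {M B' : Type} [AddCommGroup M] [Module k M] [AddCommGroup B'] [Module k B']
    (phi : M ⊗[k] B' →ₗ[k] M) (rho : M →ₗ[k] M ⊗[k] H) (f : H →ₗ[k] B') : M →ₗ[k] M :=
  phi ∘ₗ f.lTensor M ∘ₗ rho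

variable (B : Type) [AddCommGroup B] [Module k B]
variable (mul : H ⊗[k] H →ₗ[k] H) (one : H) (eps : H →ₗ[k] k)
variable (delta : H →ₗ[k] H ⊗[k] H) (lam : H →ₗ[k] H)
variable (mulB : B ⊗[k] B →ₗ[k] B) (oneB : B) (rho : B →ₗ[k] B ⊗[k] H)
variable (h : H →ₗ[k] B)

section Aux

variable {k H} {mul : H ⊗[k] H →ₗ[k] H} {one : H} {eps : H →ₗ[k] k}
variable {delta : H →ₗ[k] H ⊗[k] H} {lam : H →ₗ[k] H}

/-- λ(x₁)x₂ = ε(x)•1 -/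
lemma sid_eq (hH : IsHopfQuasigroup k H mul one eps delta lam) :
    mul ∘ₗ lam.rTensor H ∘ₗ delta = LinearMap.toSpanSingleton k H one ∘ₗ eps := by
  apply LinearMap.ext; intro x
  have key : ∀ t : H ⊗[k] H,
      (TensorProduct.map lam mul) ((TensorProduct.assoc k H H H) (t ⊗ₜ[k] one))
        = lam.rTensor H t := by
    intro t
    induction t using TensorProduct.induction_on with
    | zero => simp
    | tmul a b => simp [hH.mul_one]
    | add u v hu hv => rw [TensorProduct.add_tmul]; simp only [map_add, hu, hv]
  have h1 := congrArg (fun f : H ⊗[k] H →ₗ[k] H => f (x ⊗ₜ[k] one)) hH.antipode_left₁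
  simp only [LinearMap.comp_apply, LinearEquiv.coe_coe, LinearMap.rTensor_tmul,
    LinearMap.lTensor_tmul, key] at h1
  simpa using h1


/-- x₁λ(x₂) = ε(x)•1 -/
lemma ids_eq (hH : IsHopfQuasigroup k H mul one eps delta lam) :
    mul ∘ₗ lam.lTensor H ∘ₗ delta = LinearMap.toSpanSingleton k H one ∘ₗ eps := by
  apply LinearMap.ext; intro x
  have key : ∀ t : H ⊗[k] H,
      (TensorProduct.map mul lam) ((TensorProduct.assoc k H H H).symm (one ⊗ₜ[k] t))
        = lam.lTensor H t := by
    intro t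
    induction t using TensorProduct.induction_on with
    | zero => simp
    | tmul a b => simp [hH.one_mul]
    | add u v hu hv => rw [TensorProduct.tmul_add]; simp only [map_add, hu, hv]
  have h1 := congrArg (fun f : H ⊗[k] H →ₗ[k] H => f (one ⊗ₜ[k] x)) hH.antipode_right₁
  simp only [LinearMap.comp_apply, LinearEquiv.coe_coe, LinearMap.rTensor_tmul,
    LinearMap.lTensor_tmul, key] at h1
  simpa using h1

/-- (y·x₁)·λ(x₂) = ε(x)•y -/
lemma kcollapse (hH : IsHopfQuasigroup k H mul one eps delta lam) (y : H) :
    mul ∘ₗ TensorProduct.map (mul ∘ₗ TensorProduct.mk k H H y) lam ∘ₗ delta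
      = LinearMap.toSpanSingleton k H y ∘ₗ eps := by
  apply LinearMap.ext; intro x
  have key : ∀ t : H ⊗[k] H,
      (TensorProduct.map mul lam) ((TensorProduct.assoc k H H H).symm (y ⊗ₜ[k] t))
        = (TensorProduct.map (mul ∘ₗ TensorProduct.mk k H H y) lam) t := by
    intro t
    induction t using TensorProduct.induction_on with
    | zero => simp
    | tmul a b => simp
    | add u v hu hv => rw [TensorProduct.tmul_add]; simp only [map_add, hu, hv]
  have h1 := congrArg (fun f : H ⊗[k] H →ₗ[k] H => f (y ⊗ₜ[k] x)) hH.antipode_right₁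
  simp only [LinearMap.comp_apply, LinearEquiv.coe_coe, LinearMap.rTensor_tmul,
    LinearMap.lTensor_tmul, key] at h1
  simpa using h1

lemma lam_one (hH : IsHopfQuasigroup k H mul one eps delta lam) : lam one = one := by
  have h1 := congrArg (fun f : H →ₗ[k] H => f one) (ids_eq hH)
  simp only [LinearMap.comp_apply, hH.delta_one, LinearMap.lTensor_tmul,
    hH.eps_one, LinearMap.toSpanSingleton_apply, one_smul] at h1
  rwa [hH.one_mul] at h1

/-- left counit as a map identity -/
lemma epsL_delta (hH : IsHopfQuasigroup k H mul one eps delta lam) :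
    ((TensorProduct.lid k H).toLinearMap ∘ₗ eps.rTensor H) ∘ₗ delta = LinearMap.id := by
  apply LinearMap.ext; intro x
  simpa using hH.counit_left x

/-- right counit as a map identity -/
lemma epsR_delta (hH : IsHopfQuasigroup k H mul one eps delta lam) :
    ((TensorProduct.rid k H).toLinearMap ∘ₗ eps.lTensor H) ∘ₗ delta = LinearMap.id := by
  apply LinearMap.ext; intro x
  simpa using hH.counit_right x
/-- componentwise multiplication on `(H⊗H)⊗(H⊗H)` -/
noncomputable def mulT (mul : H ⊗[k] H →ₗ[k] H) :
    ((H ⊗[k] H) ⊗[k] (H ⊗[k] H)) →ₗ[k] H ⊗[k] H :=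
  TensorProduct.map mul mul ∘ₗ (TensorProduct.tensorTensorTensorComm k H H H H).toLinearMap

noncomputable def cSS (lam : H →ₗ[k] H) : H ⊗[k] H →ₗ[k] H ⊗[k] H :=
  (TensorProduct.comm k H H).toLinearMap ∘ₗ TensorProduct.map lam lam

noncomputable def bigPhi (mul : H ⊗[k] H →ₗ[k] H) (lam : H →ₗ[k] H) :
    ((H ⊗[k] H) ⊗[k] ((H ⊗[k] H) ⊗[k] (H ⊗[k] H))) →ₗ[k] H ⊗[k] H :=
  mulT mul ∘ₗ TensorProduct.map (mulT mul) (cSS lam)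
    ∘ₗ (TensorProduct.assoc k (H ⊗[k] H) (H ⊗[k] H) (H ⊗[k] H)).symm.toLinearMap

lemma coassoc_symm (hH : IsHopfQuasigroup k H mul one eps delta lam) :
    (TensorProduct.assoc k H H H).symm.toLinearMap ∘ₗ delta.lTensor H ∘ₗ delta
      = delta.rTensor H ∘ₗ delta := by
  rw [← hH.coassoc]
  apply LinearMap.ext; intro x
  simp

lemma mulT_one_tmul (hH : IsHopfQuasigroup k H mul one eps delta lam)
    (t : H ⊗[k] H) : mulT mul ((one ⊗ₜ[k] one) ⊗ₜ[k] t) = t := by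
  induction t using TensorProduct.induction_on with
  | zero => simp
  | tmul a b => simp [mulT, hH.one_mul]
  | add u v hu hv => rw [TensorProduct.tmul_add]; simp only [map_add, hu, hv]

/-- left multiplication map `z ↦ (y·z₁)·λ(z₂)` building block -/
noncomputable def Pmap (mul : H ⊗[k] H →ₗ[k] H) (lam : H →ₗ[k] H) (y : H) :
    H ⊗[k] H →ₗ[k] H :=
  mul ∘ₗ TensorProduct.map (mul ∘ₗ TensorProduct.mk k H H y) lam

noncomputable def shuf2 : H ⊗[k] (H ⊗[k] H) →ₗ[k] (H ⊗[k] H) ⊗[k] H :=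
  (TensorProduct.assoc k H H H).symm.toLinearMap
    ∘ₗ ((TensorProduct.comm k H H).toLinearMap.lTensor H)

noncomputable def shuf1 : H ⊗[k] (H ⊗[k] (H ⊗[k] H)) →ₗ[k] (H ⊗[k] H) ⊗[k] (H ⊗[k] H) :=
  (TensorProduct.assoc k H H (H ⊗[k] H)).symm.toLinearMap
    ∘ₗ ((TensorProduct.comm k (H ⊗[k] H) H).toLinearMap.lTensor H)
    ∘ₗ (((TensorProduct.assoc k H H H).symm.toLinearMap).lTensor H)

lemma K_eq (hH : IsHopfQuasigroup k H mul one eps delta lam) :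
    TensorProduct.map delta delta ∘ₗ delta
      = (TensorProduct.assoc k H H (H ⊗[k] H)).symm.toLinearMap
          ∘ₗ ((delta.lTensor H).lTensor H) ∘ₗ (delta.lTensor H) ∘ₗ delta := by
  have nat : (TensorProduct.assoc k H H (H ⊗[k] H)).symm.toLinearMap
        ∘ₗ ((delta.lTensor H).lTensor H)
      = (delta.lTensor (H ⊗[k] H)) ∘ₗ (TensorProduct.assoc k H H H).symm.toLinearMap := by
    apply TensorProduct.ext'; intro x t
    induction t using TensorProduct.induction_on with
    | zero => simp
    | tmul a b => simp
    | add u v hu hv => rw [TensorProduct.tmul_add]; simp only [map_add, hu, hv]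
  calc TensorProduct.map delta delta ∘ₗ delta
      = (delta.lTensor (H ⊗[k] H)) ∘ₗ (delta.rTensor H) ∘ₗ delta := by
        rw [← LinearMap.comp_assoc, LinearMap.lTensor_comp_rTensor]
    _ = (delta.lTensor (H ⊗[k] H)) ∘ₗ (TensorProduct.assoc k H H H).symm.toLinearMap
          ∘ₗ (delta.lTensor H) ∘ₗ delta := by rw [coassoc_symm hH]
    _ = _ := by
        rw [← LinearMap.comp_assoc, ← nat]
        simp only [LinearMap.comp_assoc]

lemma shuf1_assoc :
    (shuf1 (k := k) (H := H)) ∘ₗ ((TensorProduct.assoc k H H H).toLinearMap.lTensor H)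
      = (TensorProduct.assoc k H H (H ⊗[k] H)).symm.toLinearMap
          ∘ₗ ((TensorProduct.comm k (H ⊗[k] H) H).toLinearMap.lTensor H) := by
  apply TensorProduct.ext'; intro x t
  induction t using TensorProduct.induction_on with
  | zero => simp
  | tmul a b =>
    induction a using TensorProduct.induction_on with
    | zero => simp [TensorProduct.zero_tmul]
    | tmul a₁ a₂ => simp [shuf1]
    | add u v hu hv =>
      rw [TensorProduct.add_tmul, TensorProduct.tmul_add]
      simp only [map_add, hu, hv]
  | add u v hu hv => rw [TensorProduct.tmul_add]; simp only [map_add, hu, hv]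

lemma shuf_nat :
    ((TensorProduct.assoc k H H (H ⊗[k] H)).symm.toLinearMap
        ∘ₗ ((TensorProduct.comm k (H ⊗[k] H) H).toLinearMap.lTensor H))
      ∘ₗ ((delta.rTensor H).lTensor H)
    = (delta.lTensor (H ⊗[k] H)) ∘ₗ (shuf2 (k := k) (H := H)) := by
  apply TensorProduct.ext'; intro x t
  induction t using TensorProduct.induction_on with
  | zero => simp
  | tmul z c => simp [shuf2]
  | add u v hu hv => rw [TensorProduct.tmul_add]; simp only [map_add, hu, hv]

lemma n5_lemma (eps : H →ₗ[k] k) (y' : H) (P : H ⊗[k] H →ₗ[k] H) :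
    TensorProduct.map P (LinearMap.toSpanSingleton k H y' ∘ₗ eps) ∘ₗ (shuf2 (k := k) (H := H))
      = ((TensorProduct.mk k H H).flip y') ∘ₗ P
          ∘ₗ (((TensorProduct.lid k H).toLinearMap ∘ₗ eps.rTensor H).lTensor H) := by
  apply TensorProduct.ext'; intro x t
  induction t using TensorProduct.induction_on with
  | zero => simp
  | tmul z c =>
    simp [shuf2, TensorProduct.smul_tmul, TensorProduct.tmul_smul]
  | add u v hu hv => rw [TensorProduct.tmul_add]; simp only [map_add, hu, hv]
lemma lambda_eq (mul : H ⊗[k] H →ₗ[k] H) (lam : H →ₗ[k] H) (y y' : H)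
    (u : H ⊗[k] (H ⊗[k] (H ⊗[k] H))) :
    bigPhi mul lam ((y ⊗ₜ[k] y') ⊗ₜ[k] ((TensorProduct.assoc k H H (H ⊗[k] H)).symm u))
      = TensorProduct.map (Pmap mul lam y) (Pmap mul lam y') (shuf1 u) := by
  induction u using TensorProduct.induction_on with
  | zero => simp
  | tmul x₁ t =>
    induction t using TensorProduct.induction_on with
    | zero => simp [TensorProduct.tmul_zero]
    | tmul x₂ s =>
      induction s using TensorProduct.induction_on with
      | zero => simp [TensorProduct.tmul_zero]
      | tmul x₃ x₄ => simp [bigPhi, mulT, cSS, Pmap, shuf1]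
      | add u v hu hv =>
        rw [TensorProduct.tmul_add, TensorProduct.tmul_add]
        simp only [map_add, TensorProduct.tmul_add, hu, hv]
    | add u v hu hv =>
      rw [TensorProduct.tmul_add]
      simp only [map_add, TensorProduct.tmul_add, hu, hv]
  | add u v hu hv => simp only [map_add, TensorProduct.tmul_add, hu, hv]
lemma anticomult (hH : IsHopfQuasigroup k H mul one eps delta lam) :
    delta ∘ₗ lam
      = (TensorProduct.comm k H H).toLinearMap ∘ₗ TensorProduct.map lam lam ∘ₗ delta := by
  have hg' : (TensorProduct.comm k H H).toLinearMap ∘ₗ TensorProduct.map lam lam ∘ₗ delta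
      = cSS lam ∘ₗ delta := by rw [cSS, LinearMap.comp_assoc]
  set f' : H →ₗ[k] H ⊗[k] H := delta ∘ₗ lam with hf'
  set g' : H →ₗ[k] H ⊗[k] H := cSS lam ∘ₗ delta with hg
  set K : H →ₗ[k] (H ⊗[k] H) ⊗[k] (H ⊗[k] H) :=
    TensorProduct.map delta delta ∘ₗ delta with hK
  set A : H →ₗ[k] H ⊗[k] H :=
    bigPhi mul lam ∘ₗ TensorProduct.map f' K ∘ₗ delta with hA
  -- Route I : A = g'
  have routeI : A = g' := by
    have hdm : mulT mul ∘ₗ TensorProduct.map delta delta = delta ∘ₗ mul := by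
      rw [hH.delta_mul, mulT, LinearMap.comp_assoc]
    have hmf : mulT mul ∘ₗ TensorProduct.map f' delta
        = delta ∘ₗ (mul ∘ₗ lam.rTensor H) := by
      have e : TensorProduct.map f' delta
          = TensorProduct.map delta delta ∘ₗ lam.rTensor H := by
        rw [hf', LinearMap.rTensor, ← TensorProduct.map_comp, LinearMap.comp_id]
      rw [e, ← LinearMap.comp_assoc, hdm, LinearMap.comp_assoc]
    have hone' : delta ∘ₗ (LinearMap.toSpanSingleton k H one ∘ₗ eps)
        = LinearMap.toSpanSingleton k (H ⊗[k] H) (one ⊗ₜ[k] one) ∘ₗ eps := by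
      apply LinearMap.ext; intro c
      simp [hH.delta_one]
    have hstep9 : mulT mul ∘ₗ TensorProduct.map
          (LinearMap.toSpanSingleton k (H ⊗[k] H) (one ⊗ₜ[k] one) ∘ₗ eps) g'
        = g' ∘ₗ (TensorProduct.lid k H).toLinearMap ∘ₗ eps.rTensor H := by
      apply TensorProduct.ext'; intro a b
      simp only [LinearMap.comp_apply, TensorProduct.map_tmul, LinearMap.rTensor_tmul,
        LinearMap.toSpanSingleton_apply, TensorProduct.lid_tmul, LinearEquiv.coe_coe]
      rw [map_smul g', TensorProduct.smul_tmul, mulT_one_tmul hH]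
    apply LinearMap.ext; intro x
    simp only [hA, LinearMap.comp_apply]
    have m1 : TensorProduct.map f' K
        = TensorProduct.map f' (TensorProduct.map delta delta) ∘ₗ delta.lTensor H := by
      rw [hK, LinearMap.map_comp_lTensor]
    rw [DFunLike.congr_fun m1 (delta x)]
    simp only [bigPhi, LinearMap.comp_apply, LinearEquiv.coe_coe]
    rw [← TensorProduct.map_map_assoc_symm f' delta delta ((delta.lTensor H) (delta x))]
    have m3 : (TensorProduct.assoc k H H H).symm ((delta.lTensor H) (delta x))
        = (delta.rTensor H) (delta x) := by
      have := DFunLike.congr_fun (coassoc_symm hH) x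
      simpa using this
    rw [m3]
    have m4 : TensorProduct.map (mulT mul) (cSS lam)
          ∘ₗ TensorProduct.map (TensorProduct.map f' delta) delta
        = TensorProduct.map (delta ∘ₗ (mul ∘ₗ lam.rTensor H)) g' := by
      rw [← TensorProduct.map_comp, hmf, hg]
    have m4' := DFunLike.congr_fun m4 ((delta.rTensor H) (delta x))
    simp only [LinearMap.comp_apply] at m4' ⊢
    rw [m4']
    have m5 : TensorProduct.map (delta ∘ₗ (mul ∘ₗ lam.rTensor H)) g' ∘ₗ delta.rTensor H
        = TensorProduct.map (LinearMap.toSpanSingleton k (H ⊗[k] H) (one ⊗ₜ[k] one) ∘ₗ eps)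
            g' := by
      rw [LinearMap.map_comp_rTensor]
      congr 1
      rw [LinearMap.comp_assoc, LinearMap.comp_assoc, sid_eq hH, hone']
    have m5' := DFunLike.congr_fun m5 (delta x)
    simp only [LinearMap.comp_apply] at m5' ⊢
    rw [m5']
    have m6' := DFunLike.congr_fun hstep9 (delta x)
    simp only [LinearMap.comp_apply] at m6' ⊢
    rw [m6']
    simp only [LinearMap.comp_apply, LinearEquiv.coe_coe]
    rw [hH.counit_left]
  -- Route II : A = f'
  have routeII : A = f' := by
    have split : TensorProduct.map f' K = K.lTensor (H ⊗[k] H) ∘ₗ f'.rTensor H := by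
      rw [LinearMap.lTensor_comp_rTensor]
    have p1 : ∀ y : H, Pmap mul lam y ∘ₗ delta
        = LinearMap.toSpanSingleton k H y ∘ₗ eps := by
      intro y
      rw [Pmap, LinearMap.comp_assoc, kcollapse hH]
    have key : bigPhi mul lam ∘ₗ K.lTensor (H ⊗[k] H)
        = (TensorProduct.rid k (H ⊗[k] H)).toLinearMap ∘ₗ eps.lTensor (H ⊗[k] H) := by
      have n1' : LinearMap.lTensor H (delta.lTensor H ∘ₗ delta)
          = LinearMap.lTensor H ((TensorProduct.assoc k H H H).toLinearMap
              ∘ₗ delta.rTensor H ∘ₗ delta) := by rw [hH.coassoc]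
      have n1 : ((delta.lTensor H).lTensor H) ∘ₗ (delta.lTensor H ∘ₗ delta)
          = ((TensorProduct.assoc k H H H).toLinearMap.lTensor H)
              ∘ₗ (((delta.rTensor H).lTensor H) ∘ₗ (delta.lTensor H ∘ₗ delta)) := by
        have := congrArg (fun F => F ∘ₗ delta) n1'
        simpa only [LinearMap.lTensor_comp, LinearMap.comp_assoc] using this
      have n6 : ((((TensorProduct.lid k H).toLinearMap ∘ₗ eps.rTensor H).lTensor H))
          ∘ₗ (delta.lTensor H ∘ₗ delta) = delta := by
        rw [← LinearMap.comp_assoc, ← LinearMap.lTensor_comp, epsL_delta hH,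
          LinearMap.lTensor_id, LinearMap.id_comp]
      apply TensorProduct.ext'; intro w x
      induction w using TensorProduct.induction_on with
      | zero => simp [TensorProduct.zero_tmul]
      | add u v hu hv => rw [TensorProduct.add_tmul]; simp only [map_add, hu, hv]
      | tmul y y' =>
        simp only [LinearMap.comp_apply, LinearMap.lTensor_tmul, LinearEquiv.coe_coe,
          TensorProduct.rid_tmul]
        have e1 : K x = (TensorProduct.assoc k H H (H ⊗[k] H)).symm
            ((((delta.lTensor H).lTensor H) ∘ₗ (delta.lTensor H ∘ₗ delta)) x) := by
          rw [hK]
          have := DFunLike.congr_fun (K_eq hH) x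
          simpa [LinearMap.comp_apply] using this
        rw [e1, lambda_eq mul lam y y']
        rw [DFunLike.congr_fun n1 x]
        simp only [LinearMap.comp_apply]
        rw [← LinearMap.comp_apply (shuf1) _, DFunLike.congr_fun shuf1_assoc _]
        have sn := DFunLike.congr_fun (shuf_nat (delta := delta))
            ((delta.lTensor H) (delta x))
        simp only [LinearMap.comp_apply] at sn ⊢
        rw [sn]
        rw [← LinearMap.comp_apply
          (TensorProduct.map (Pmap mul lam y) (Pmap mul lam y'))
          (delta.lTensor (H ⊗[k] H))]
        rw [LinearMap.map_comp_lTensor, p1 y']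
        have n5' := DFunLike.congr_fun (n5_lemma eps y' (Pmap mul lam y))
            ((delta.lTensor H) (delta x))
        simp only [LinearMap.comp_apply] at n5' ⊢
        rw [n5']
        have n6' := DFunLike.congr_fun n6 x
        simp only [LinearMap.comp_apply] at n6'
        rw [n6']
        have p1' := DFunLike.congr_fun (p1 y) x
        simp only [LinearMap.comp_apply] at p1'
        rw [p1']
        simp [TensorProduct.smul_tmul']
    calc A = (bigPhi mul lam ∘ₗ K.lTensor (H ⊗[k] H)) ∘ₗ (f'.rTensor H ∘ₗ delta) := by
          rw [hA, split]; simp only [LinearMap.comp_assoc]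
      _ = ((TensorProduct.rid k (H ⊗[k] H)).toLinearMap ∘ₗ eps.lTensor (H ⊗[k] H))
            ∘ₗ (f'.rTensor H ∘ₗ delta) := by rw [key]
      _ = f' ∘ₗ (((TensorProduct.rid k H).toLinearMap ∘ₗ eps.lTensor H) ∘ₗ delta) := by
          have fin : ((TensorProduct.rid k (H ⊗[k] H)).toLinearMap
                ∘ₗ eps.lTensor (H ⊗[k] H)) ∘ₗ f'.rTensor H
              = f' ∘ₗ ((TensorProduct.rid k H).toLinearMap ∘ₗ eps.lTensor H) := by
            apply TensorProduct.ext'; intro a x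
            simp
          rw [← LinearMap.comp_assoc, fin, LinearMap.comp_assoc]
      _ = f' := by rw [epsR_delta hH, LinearMap.comp_id]
  rw [hg']; exact routeII.symm.trans routeI
section Main

variable {B : Type} [AddCommGroup B] [Module k B]
variable {mulB : B ⊗[k] B →ₗ[k] B} {oneB : B} {rho : B →ₗ[k] B ⊗[k] H}
variable {h : H →ₗ[k] B}

lemma hz_lemma (hH : IsHopfQuasigroup k H mul one eps delta lam)
    (hone : h one = oneB) :
    ((h ∘ₗ lam) ∘ₗ mul ∘ₗ lam.lTensor H) ∘ₗ delta
      = LinearMap.toSpanSingleton k B oneB ∘ₗ eps := by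
  apply LinearMap.ext; intro z
  have e := DFunLike.congr_fun (ids_eq hH) z
  simp only [LinearMap.comp_apply] at e ⊢
  rw [e]
  simp [lam_one hH, hone]

lemma chi_eq_lemma (mul : H ⊗[k] H →ₗ[k] H) (lam : H →ₗ[k] H)
    (mulB : B ⊗[k] B →ₗ[k] B) (h : H →ₗ[k] B) :
    mulB ∘ₗ (h ∘ₗ lam).lTensor B ∘ₗ TensorProduct.map mulB mul
        ∘ₗ (TensorProduct.tensorTensorTensorComm k B H B H).toLinearMap
        ∘ₗ ((h.rTensor H ∘ₗ cSS lam).lTensor (B ⊗[k] H))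
        ∘ₗ (TensorProduct.assoc k B H (H ⊗[k] H)).symm.toLinearMap
        ∘ₗ ((TensorProduct.assoc k H H H).toLinearMap.lTensor B)
      = mulB ∘ₗ TensorProduct.map (mulB ∘ₗ (h ∘ₗ lam).lTensor B)
            ((h ∘ₗ lam) ∘ₗ mul ∘ₗ lam.lTensor H)
          ∘ₗ ((TensorProduct.assoc k B H (H ⊗[k] H)).symm.toLinearMap
            ∘ₗ (TensorProduct.comm k (H ⊗[k] H) H).toLinearMap.lTensor B) := by
  apply TensorProduct.ext'; intro b t
  induction t using TensorProduct.induction_on with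
  | zero => simp [TensorProduct.tmul_zero]
  | tmul s w =>
    induction s using TensorProduct.induction_on with
    | zero => simp [TensorProduct.zero_tmul, TensorProduct.tmul_zero]
    | tmul a c => simp [cSS]
    | add u v hu hv =>
      rw [TensorProduct.add_tmul, TensorProduct.tmul_add]
      simp only [map_add, hu, hv]
  | add u v hu hv => rw [TensorProduct.tmul_add]; simp only [map_add, hu, hv]

lemma theta_nat :
    ((TensorProduct.assoc k B H (H ⊗[k] H)).symm.toLinearMap
        ∘ₗ (TensorProduct.comm k (H ⊗[k] H) H).toLinearMap.lTensor B)
      ∘ₗ ((delta.rTensor H).lTensor B)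
    = (delta.lTensor (B ⊗[k] H))
        ∘ₗ ((TensorProduct.assoc k B H H).symm.toLinearMap
          ∘ₗ (TensorProduct.comm k H H).toLinearMap.lTensor B) := by
  apply TensorProduct.ext'; intro b t
  induction t using TensorProduct.induction_on with
  | zero => simp [TensorProduct.tmul_zero]
  | tmul z w => simp
  | add u v hu hv => rw [TensorProduct.tmul_add]; simp only [map_add, hu, hv]

lemma fin2_lemma (eps : H →ₗ[k] k) (oneB : B) (mulB : B ⊗[k] B →ₗ[k] B)
    (F : B ⊗[k] H →ₗ[k] B) (hmul1 : ∀ b, mulB (b ⊗ₜ[k] oneB) = b) :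
    mulB ∘ₗ TensorProduct.map F (LinearMap.toSpanSingleton k B oneB ∘ₗ eps)
        ∘ₗ ((TensorProduct.assoc k B H H).symm.toLinearMap
          ∘ₗ (TensorProduct.comm k H H).toLinearMap.lTensor B)
      = F ∘ₗ (((TensorProduct.lid k H).toLinearMap ∘ₗ eps.rTensor H).lTensor B) := by
  apply TensorProduct.ext'; intro b t
  induction t using TensorProduct.induction_on with
  | zero => simp [TensorProduct.tmul_zero]
  | tmul z w =>
    simp only [LinearMap.comp_apply, LinearMap.lTensor_tmul, LinearEquiv.coe_coe,
      TensorProduct.comm_tmul, TensorProduct.assoc_symm_tmul, TensorProduct.map_tmul,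
      LinearMap.toSpanSingleton_apply, LinearMap.rTensor_tmul, TensorProduct.lid_tmul]
    rw [TensorProduct.tmul_smul, map_smul, hmul1, TensorProduct.tmul_smul, map_smul]
  | add u v hu hv => rw [TensorProduct.tmul_add]; simp only [map_add, hu, hv]

lemma nat2 :
    (delta.lTensor (B ⊗[k] H)) ∘ₗ (TensorProduct.assoc k B H H).symm.toLinearMap
      = (TensorProduct.assoc k B H (H ⊗[k] H)).symm.toLinearMap
          ∘ₗ ((delta.lTensor H).lTensor B) := by
  apply TensorProduct.ext'; intro b t
  induction t using TensorProduct.induction_on with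
  | zero => simp [TensorProduct.tmul_zero]
  | tmul x z => simp
  | add u v hu hv => rw [TensorProduct.tmul_add]; simp only [map_add, hu, hv]


theorem qB_idempotent'
    (hH : IsHopfQuasigroup k H mul one eps delta lam)
    (hB : IsComoduleMagma k H mul one eps delta mulB oneB rho)
    (hcomod : rho ∘ₗ h = h.rTensor H ∘ₗ delta)
    (hone : h one = oneB) :
    act k H mulB rho (h ∘ₗ lam) ∘ₗ act k H mulB rho (h ∘ₗ lam)
      = act k H mulB rho (h ∘ₗ lam) := by
  have hlam : delta ∘ₗ lam = cSS lam ∘ₗ delta := by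
    rw [anticomult hH, cSS, LinearMap.comp_assoc]
  apply LinearMap.ext; intro b
  simp only [act, LinearMap.comp_apply]
  -- step A : comodule-magma compatibility
  have sA := DFunLike.congr_fun hB.mul_compat ((h ∘ₗ lam).lTensor B (rho b))
  simp only [LinearMap.comp_apply] at sA
  rw [sA]
  -- step B
  have sB : TensorProduct.map rho rho ∘ₗ (h ∘ₗ lam).lTensor B
      = TensorProduct.map rho (rho ∘ₗ (h ∘ₗ lam)) := by
    rw [LinearMap.map_comp_lTensor]
  have sB' := DFunLike.congr_fun sB (rho b)
  simp only [LinearMap.comp_apply] at sB'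
  rw [sB']
  -- step C/D : comodule morphism, anticomultiplicativity, and splitting
  have sC : rho ∘ₗ (h ∘ₗ lam) = (h.rTensor H ∘ₗ cSS lam) ∘ₗ delta := by
    rw [← LinearMap.comp_assoc, hcomod, LinearMap.comp_assoc, hlam,
      ← LinearMap.comp_assoc]
  have sD : TensorProduct.map rho ((h.rTensor H ∘ₗ cSS lam) ∘ₗ delta)
      = ((h.rTensor H ∘ₗ cSS lam).lTensor (B ⊗[k] H))
          ∘ₗ (delta.lTensor (B ⊗[k] H)) ∘ₗ rho.rTensor H := by
    rw [← LinearMap.lTensor_comp_rTensor, LinearMap.lTensor_comp,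
      LinearMap.comp_assoc]
  rw [sC, sD]
  simp only [LinearMap.comp_apply]
  -- step E : comodule coassociativity
  have sE := DFunLike.congr_fun hB.coassoc b
  simp only [LinearMap.comp_apply] at sE
  rw [sE]
  -- step F : naturality of associator
  have sF := DFunLike.congr_fun (nat2 (delta := delta) (B := B))
      ((delta.lTensor B) (rho b))
  simp only [LinearMap.comp_apply] at sF ⊢
  rw [sF]
  -- step n8 : coassociativity of delta under lTensor B
  have n8 : ((delta.lTensor H).lTensor B) ∘ₗ (delta.lTensor B)
      = ((TensorProduct.assoc k H H H).toLinearMap.lTensor B)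
          ∘ₗ (((delta.rTensor H).lTensor B) ∘ₗ (delta.lTensor B)) := by
    simp only [← LinearMap.lTensor_comp]
    rw [← hH.coassoc]
  have n8' := DFunLike.congr_fun n8 (rho b)
  simp only [LinearMap.comp_apply] at n8'
  rw [n8']
  -- step G : reshape to the chi form
  have sG := DFunLike.congr_fun (chi_eq_lemma mul lam mulB h)
      (((delta.rTensor H).lTensor B) ((delta.lTensor B) (rho b)))
  simp only [LinearMap.comp_apply] at sG ⊢
  rw [sG]
  -- step H : theta naturality
  have sH := DFunLike.congr_fun (theta_nat (delta := delta) (B := B))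
      ((delta.lTensor B) (rho b))
  simp only [LinearMap.comp_apply] at sH
  rw [sH]
  -- step I : inner collapse via x₁λ(x₂) = ε
  have sI : TensorProduct.map (mulB ∘ₗ (h ∘ₗ lam).lTensor B)
        ((h ∘ₗ lam) ∘ₗ mul ∘ₗ lam.lTensor H) ∘ₗ (delta.lTensor (B ⊗[k] H))
      = TensorProduct.map (mulB ∘ₗ (h ∘ₗ lam).lTensor B)
          (LinearMap.toSpanSingleton k B oneB ∘ₗ eps) := by
    rw [LinearMap.map_comp_lTensor]
    congr 1
    exact hz_lemma hH hone
  have sI' := DFunLike.congr_fun sI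
      ((((TensorProduct.assoc k B H H).symm.toLinearMap
          ∘ₗ (TensorProduct.comm k H H).toLinearMap.lTensor B))
        ((delta.lTensor B) (rho b)))
  simp only [LinearMap.comp_apply] at sI' ⊢
  rw [sI']
  -- step J : multiply by the unit of B
  have sJ := DFunLike.congr_fun
      (fin2_lemma eps oneB mulB (mulB ∘ₗ (h ∘ₗ lam).lTensor B) hB.mul_oneB)
      ((delta.lTensor B) (rho b))
  simp only [LinearMap.comp_apply] at sJ
  rw [sJ]
  -- step K : counit
  have sK : ((((TensorProduct.lid k H).toLinearMap ∘ₗ eps.rTensor H).lTensor B))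
      ∘ₗ (delta.lTensor B) = LinearMap.id := by
    rw [← LinearMap.lTensor_comp, epsL_delta hH, LinearMap.lTensor_id]
  have sK' := DFunLike.congr_fun sK (rho b)
  simp only [LinearMap.comp_apply] at sK'
  rw [sK']
  rw [LinearMap.id_apply]
end Main
end Aux


/-- For a Hopf quasigroup `H`, a right `H`-comodule magma `B` and a total integral
`h : H → B` (a right `H`-comodule morphism with `h 1 = 1`), the endomorphism
`q_B(b) = b₍₀₎ · h(λ(b₍₁₎))` is idempotent. -/
theorem qB_idempotent
    (hH : IsHopfQuasigroup k H mul one eps delta lam)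
    (hB : IsComoduleMagma k H mul one eps delta mulB oneB rho)
    (hcomod : rho ∘ₗ h = h.rTensor H ∘ₗ delta)
    (hone : h one = oneB) :
    act k H mulB rho (h ∘ₗ lam) ∘ₗ act k H mulB rho (h ∘ₗ lam)
      = act k H mulB rho (h ∘ₗ lam) :=
  qB_idempotent' hH hB hcomod hone

end DoiHopf
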